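/- arXiv:2602.10134 — 10 statements merged into one kernel-verified Lean document; each statement's English description precedes it below -/
import Mathlib

section
/- Let C be symmetric positive definite, K in R^{d_in×N} and R in R^{d_out×N} both of full column rank N. Define ΔW = R K^T (C + K K^T)^{-1} and M = ΔW C. Then the row space of M equals the column space of K; equivalently, if M = U_N Σ_N V_N^T is the compact (rank-N) singular value decomposition, then col(V_N) = col(K). -/
open Matrix

/-- Column space of a matrix, as the range of the associated linear map on vectors. -/
noncomputable def colSpace {m n : ℕ} (M : Matrix (Fin m) (Fin n) ℝ) :
    Submodule ℝ (Fin m → ℝ) :=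
  LinearMap.range M.mulVecLin

/-- Row space of a matrix: the column space of its transpose. -/
noncomputable def rowSpace {m n : ℕ} (M : Matrix (Fin m) (Fin n) ℝ) :
    Submodule ℝ (Fin n → ℝ) :=
  colSpace Mᵀ

lemma colSpace_mul_of_surj {m n k : ℕ} (A : Matrix (Fin m) (Fin n) ℝ)
    (B : Matrix (Fin n) (Fin k) ℝ) (h : Function.Surjective B.mulVecLin) :
    colSpace (A * B) = colSpace A := by
  unfold colSpace
  rw [Matrix.mulVecLin_mul, LinearMap.range_comp,
    LinearMap.range_eq_top.2 h, Submodule.map_top]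

lemma surj_of_right_inv {n k : ℕ} (B : Matrix (Fin n) (Fin k) ℝ)
    (D : Matrix (Fin k) (Fin n) ℝ) (h : B * D = 1) :
    Function.Surjective B.mulVecLin := by
  intro y
  refine ⟨D.mulVecLin y, ?_⟩
  have : (B * D).mulVecLin y = y := by rw [h]; simp
  simpa [Matrix.mulVecLin_mul] using this

lemma surj_of_rank {m n : ℕ} (A : Matrix (Fin m) (Fin n) ℝ) (h : A.rank = n) :
    Function.Surjective Aᵀ.mulVecLin := by
  rw [← LinearMap.range_eq_top]
  have hr : Aᵀ.rank = n := by rw [Matrix.rank_transpose]; exact h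
  have : Module.finrank ℝ (LinearMap.range Aᵀ.mulVecLin) = n := hr
  apply Submodule.eq_top_of_finrank_eq
  simpa using this

/-- **Recovery of the key subspace for MEMIT.** Let `C` be symmetric positive
definite, and let `K : ℝ^{d_in×N}`, `R : ℝ^{d_out×N}` both have full column
rank `N`. With `ΔW = R Kᵀ (C + K Kᵀ)⁻¹` and `M = ΔW C`, the row space of `M`
equals the column space of `K`; moreover for any compact (rank-`N`) singular
value decomposition `M = U_N Σ_N V_Nᵀ` (with `U_N, V_N` having orthonormal
columns and `Σ_N` diagonal and invertible), `col (V_N) = col (K)`. -/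
theorem memit_key_subspace_recovery {din dout N : ℕ}
    (C : Matrix (Fin din) (Fin din) ℝ) (hC : C.PosDef)
    (K : Matrix (Fin din) (Fin N) ℝ) (R : Matrix (Fin dout) (Fin N) ℝ)
    (hK : K.rank = N) (hR : R.rank = N)
    (ΔW : Matrix (Fin dout) (Fin din) ℝ) (hΔW : ΔW = R * Kᵀ * (C + K * Kᵀ)⁻¹)
    (M : Matrix (Fin dout) (Fin din) ℝ) (hM : M = ΔW * C) :
    rowSpace M = colSpace K ∧
      ∀ (U : Matrix (Fin dout) (Fin N) ℝ) (Sig : Matrix (Fin N) (Fin N) ℝ)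
        (V : Matrix (Fin din) (Fin N) ℝ),
        Uᵀ * U = 1 → Vᵀ * V = 1 → Sig.IsDiag → IsUnit Sig.det →
        M = U * Sig * Vᵀ → colSpace V = colSpace K := by
  set A := C + K * Kᵀ with hA
  have hCsymm : Cᵀ = C := by
    have := hC.isHermitian
    rwa [Matrix.IsHermitian, Matrix.conjTranspose_eq_transpose_of_trivial] at this
  have hApd : A.PosDef := by
    apply hC.add_posSemidef
    have := Matrix.posSemidef_self_mul_conjTranspose K
    rwa [Matrix.conjTranspose_eq_transpose_of_trivial] at this
  have hAdet : IsUnit A.det := isUnit_iff_ne_zero.mpr hApd.det_pos.ne'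
  have hCdet : IsUnit C.det := isUnit_iff_ne_zero.mpr hC.det_pos.ne'
  have hAsymm : Aᵀ = A := by
    rw [hA, Matrix.transpose_add, hCsymm, Matrix.transpose_mul, Matrix.transpose_transpose]
  have hAinvsymm : (A⁻¹)ᵀ = A⁻¹ := by
    rw [Matrix.transpose_nonsing_inv, hAsymm]
  have h1 : A⁻¹ * A = 1 := Matrix.nonsing_inv_mul A hAdet
  have h1' : A * A⁻¹ = 1 := Matrix.mul_nonsing_inv A hAdet
  have h3 : C * C⁻¹ = 1 := Matrix.mul_nonsing_inv C hCdet
  set S : Matrix (Fin N) (Fin N) ℝ := 1 - Kᵀ * A⁻¹ * K with hS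
  set T : Matrix (Fin N) (Fin N) ℝ := 1 + Kᵀ * C⁻¹ * K with hT
  have hKK : K * Kᵀ = A - C := by rw [hA]; abel
  have e : Kᵀ * A⁻¹ * K * (Kᵀ * C⁻¹ * K) = Kᵀ * C⁻¹ * K - Kᵀ * A⁻¹ * K := by
    have step1 : Kᵀ * A⁻¹ * K * (Kᵀ * C⁻¹ * K) = Kᵀ * A⁻¹ * (K * Kᵀ) * (C⁻¹ * K) := by
      simp only [Matrix.mul_assoc]
    rw [step1, hKK, Matrix.mul_sub, Matrix.sub_mul]
    congr 1
    · simp only [Matrix.mul_assoc]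
      rw [← Matrix.mul_assoc A⁻¹ A (C⁻¹ * K), h1, Matrix.one_mul]
    · simp only [Matrix.mul_assoc]
      rw [← Matrix.mul_assoc C C⁻¹ K, h3, Matrix.one_mul]
  have hST : S * T = 1 := by
    have expand : S * T =
        1 + Kᵀ * C⁻¹ * K - Kᵀ * A⁻¹ * K - Kᵀ * A⁻¹ * K * (Kᵀ * C⁻¹ * K) := by
      rw [hS, hT]; noncomm_ring
    rw [expand, e]; abel
  have hTS : T * S = 1 := mul_eq_one_comm.mp hST
  have hCA : C * (A⁻¹ * K) = K * S := by
    have hC' : C = A - K * Kᵀ := by rw [hA]; abel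
    calc C * (A⁻¹ * K) = A * (A⁻¹ * K) - K * (Kᵀ * (A⁻¹ * K)) := by
          rw [hC', Matrix.sub_mul, Matrix.mul_assoc]
      _ = K - K * (Kᵀ * A⁻¹ * K) := by
          rw [← Matrix.mul_assoc A A⁻¹ K, h1', Matrix.one_mul, Matrix.mul_assoc Kᵀ A⁻¹ K]
      _ = K * S := by rw [hS, Matrix.mul_sub, Matrix.mul_one]
  have hMt : Mᵀ = K * (S * Rᵀ) := by
    have hDW : ΔWᵀ = A⁻¹ * (K * Rᵀ) := by
      rw [hΔW, Matrix.transpose_mul, Matrix.transpose_mul, Matrix.transpose_transpose,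
        hAinvsymm]
    calc Mᵀ = Cᵀ * ΔWᵀ := by rw [hM, Matrix.transpose_mul]
      _ = C * (A⁻¹ * (K * Rᵀ)) := by rw [hCsymm, hDW]
      _ = C * (A⁻¹ * K) * Rᵀ := by simp only [Matrix.mul_assoc]
      _ = K * S * Rᵀ := by rw [hCA]
      _ = K * (S * Rᵀ) := by rw [Matrix.mul_assoc]
  have hSsurj : Function.Surjective S.mulVecLin := surj_of_right_inv S T hST
  have hRsurj : Function.Surjective Rᵀ.mulVecLin := surj_of_rank R hR
  have hSRsurj : Function.Surjective (S * Rᵀ).mulVecLin := by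
    rw [Matrix.mulVecLin_mul]; exact hSsurj.comp hRsurj
  have hrow : rowSpace M = colSpace K := by
    rw [rowSpace, hMt]
    exact colSpace_mul_of_surj K _ hSRsurj
  refine ⟨hrow, ?_⟩
  intro U Sig V hU hV _ hSig hMsvd
  have hMt2 : Mᵀ = V * (Sigᵀ * Uᵀ) := by
    rw [hMsvd, Matrix.transpose_mul, Matrix.transpose_mul, Matrix.transpose_transpose]
  have hSigU : Function.Surjective (Sigᵀ * Uᵀ).mulVecLin := by
    rw [Matrix.mulVecLin_mul, LinearMap.coe_comp]
    exact Function.Surjective.comp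
      (surj_of_right_inv Sigᵀ Sigᵀ⁻¹ (Matrix.mul_nonsing_inv _ (by simpa using hSig)))
      (surj_of_right_inv Uᵀ U hU)
  have hVeq : colSpace V = rowSpace M := by
    rw [rowSpace, hMt2]
    exact (colSpace_mul_of_surj V _ hSigU).symm
  rw [hVeq, hrow]
end

section
/- Let C be symmetric positive definite and K in R^{d×N}. Then the row space of R K^T (C + K K^T)^{-1} C is contained in the column space of K, for any matrix R. -/
open Matrix

lemma colSpace_mul_le {m n p : ℕ} (M : Matrix (Fin m) (Fin n) ℝ)
    (X : Matrix (Fin n) (Fin p) ℝ) : colSpace (M * X) ≤ colSpace M := by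
  unfold colSpace
  rw [mulVecLin_mul]
  exact LinearMap.range_comp_le_range _ _

/-- **Key geometric property of the MEMIT update.** For symmetric positive
definite `C : ℝ^{d×d}` and `K : ℝ^{d×N}`, for any `R`:
`row (R Kᵀ (C + K Kᵀ)⁻¹ C) ⊆ col K`. -/
theorem rowSpace_memit_update_subset_colSpace {d N m : ℕ}
    (C : Matrix (Fin d) (Fin d) ℝ) (hC : C.PosDef)
    (K : Matrix (Fin d) (Fin N) ℝ) (R : Matrix (Fin m) (Fin N) ℝ) :
    rowSpace (R * Kᵀ * (C + K * Kᵀ)⁻¹ * C) ≤ colSpace K := by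
  set A := C + K * Kᵀ with hAdef
  have hKT : Kᴴ = Kᵀ := by ext i j; simp [conjTranspose_apply]
  have hKK : (K * Kᵀ).PosSemidef := by
    simpa [hKT] using Matrix.posSemidef_self_mul_conjTranspose K
  have hA : A.PosDef := hC.add_posSemidef hKK
  have hCsymm : Cᵀ = C := by simpa [Matrix.IsHermitian, hKT] using hC.isHermitian
  have hAsymm : Aᵀ = A := by
    have h : Aᴴ = A := hA.isHermitian
    rwa [show Aᴴ = Aᵀ by ext i j; simp [conjTranspose_apply]] at h
  set B : Matrix (Fin N) (Fin N) ℝ := 1 + Kᵀ * C⁻¹ * K with hBdef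
  have hKCK : (Kᵀ * C⁻¹ * K).PosSemidef := by
    have := (hC.inv.posSemidef).conjTranspose_mul_mul_same K
    simpa [hKT, Matrix.mul_assoc] using this
  have hB : B.PosDef := by
    have := Matrix.PosDef.add_posSemidef ((Matrix.PosDef.one
      (n := Fin N) (R := ℝ))) hKCK
    rwa [hBdef]
  have hCC : C * C⁻¹ = 1 := Matrix.mul_nonsing_inv _ (isUnit_iff_isUnit_det _ |>.1 hC.isUnit)
  have hCC' : C⁻¹ * C = 1 := Matrix.nonsing_inv_mul _ (isUnit_iff_isUnit_det _ |>.1 hC.isUnit)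
  have hAA' : A⁻¹ * A = 1 := Matrix.nonsing_inv_mul _ (isUnit_iff_isUnit_det _ |>.1 hA.isUnit)
  have hBB : B * B⁻¹ = 1 := Matrix.mul_nonsing_inv _ (isUnit_iff_isUnit_det _ |>.1 hB.isUnit)
  -- key identity: A * (C⁻¹ * K) = K * B
  have key : A * (C⁻¹ * K) = K * B := by
    calc A * (C⁻¹ * K)
        = C * (C⁻¹ * K) + K * Kᵀ * (C⁻¹ * K) := by rw [hAdef, Matrix.add_mul]
      _ = K + K * (Kᵀ * C⁻¹ * K) := by
          rw [← Matrix.mul_assoc C, hCC, Matrix.one_mul]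
          simp only [Matrix.mul_assoc]
      _ = K * B := by rw [hBdef, Matrix.mul_add, Matrix.mul_one]
  have key3 : C * A⁻¹ * K = K * B⁻¹ := by
    have h1 : C⁻¹ * K = A⁻¹ * (K * B) := by
      rw [← key, ← Matrix.mul_assoc, hAA', Matrix.one_mul]
    have h2 : C * A⁻¹ * (K * B) = K := by
      rw [Matrix.mul_assoc, ← h1, ← Matrix.mul_assoc, hCC, Matrix.one_mul]
    calc C * A⁻¹ * K
        = C * A⁻¹ * (K * (B * B⁻¹)) := by rw [hBB, Matrix.mul_one]
      _ = (C * A⁻¹ * (K * B)) * B⁻¹ := by simp only [Matrix.mul_assoc]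
      _ = K * B⁻¹ := by rw [h2]
  have hTrans : (R * Kᵀ * A⁻¹ * C)ᵀ = K * (B⁻¹ * Rᵀ) := by
    rw [Matrix.transpose_mul, Matrix.transpose_mul, Matrix.transpose_mul,
      Matrix.transpose_nonsing_inv, hAsymm, hCsymm, Matrix.transpose_transpose]
    calc C * (A⁻¹ * (K * Rᵀ)) = (C * A⁻¹ * K) * Rᵀ := by simp only [Matrix.mul_assoc]
      _ = K * (B⁻¹ * Rᵀ) := by rw [key3, Matrix.mul_assoc]
  unfold rowSpace
  rw [hTrans]
  exact colSpace_mul_le K _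
end

section
/- Let P be a symmetric idempotent matrix, K in R^{d_in×N} with rank(PK) = N, and R in R^{d_out×N} of full column rank N, and suppose I + K K^T P is invertible. Define ΔW = R K^T P (I + K K^T P)^{-1}. Then rank(ΔW) = N and, writing ΔW = U_N Σ_N V_N^T for its compact SVD, col(V_N) = col(P K). -/
open Matrix

lemma surj_of_rank_eq {n N : ℕ} (M : Matrix (Fin N) (Fin n) ℝ) (h : M.rank = N) :
    Function.Surjective M.mulVecLin := by
  rw [← LinearMap.range_eq_top]
  apply Submodule.eq_top_of_finrank_eq
  rw [Module.finrank_fin_fun]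
  exact h

lemma colSpace_mul_surj {m n k : ℕ} (M : Matrix (Fin m) (Fin n) ℝ)
    (Q : Matrix (Fin n) (Fin k) ℝ) (h : Function.Surjective Q.mulVecLin) :
    colSpace (M * Q) = colSpace M := by
  unfold colSpace
  rw [Matrix.mulVecLin_mul, LinearMap.range_comp, LinearMap.range_eq_top.mpr h,
    Submodule.map_top]


/-- **Recovery of the projected key subspace for AlphaEdit.** Let `P` be a
symmetric idempotent matrix, `K : ℝ^{d_in×N}` with `rank (P K) = N`,
`R : ℝ^{d_out×N}` of full column rank `N`, and suppose `I + K Kᵀ P` is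
invertible. With `ΔW = R Kᵀ P (I + K Kᵀ P)⁻¹`, we have `rank ΔW = N` and for
any compact (rank-`N`) SVD `ΔW = U_N Σ_N V_Nᵀ`, `col (V_N) = col (P K)`. -/
theorem alphaedit_key_subspace_recovery {din dout N : ℕ}
    (P : Matrix (Fin din) (Fin din) ℝ) (hPsymm : Pᵀ = P) (hPidem : P * P = P)
    (K : Matrix (Fin din) (Fin N) ℝ) (R : Matrix (Fin dout) (Fin N) ℝ)
    (hPK : (P * K).rank = N) (hR : R.rank = N)
    (hinv : IsUnit (1 + K * Kᵀ * P).det)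
    (ΔW : Matrix (Fin dout) (Fin din) ℝ)
    (hΔW : ΔW = R * Kᵀ * P * (1 + K * Kᵀ * P)⁻¹) :
    ΔW.rank = N ∧
      ∀ (U : Matrix (Fin dout) (Fin N) ℝ) (Sig : Matrix (Fin N) (Fin N) ℝ)
        (V : Matrix (Fin din) (Fin N) ℝ),
        Uᵀ * U = 1 → Vᵀ * V = 1 → Sig.IsDiag → IsUnit Sig.det →
        ΔW = U * Sig * Vᵀ → colSpace V = colSpace (P * K) := by
  have hKtP : (P * K)ᵀ = Kᵀ * P := by rw [transpose_mul, hPsymm]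
  have h1 : Kᵀ * P * K = (P * K)ᵀ * (P * K) := by
    rw [hKtP, Matrix.mul_assoc Kᵀ P (P * K), ← Matrix.mul_assoc P P K, hPidem,
      ← Matrix.mul_assoc]
  have hS : IsUnit (1 + Kᵀ * P * K).det := by
    rw [h1]
    have hpd : ((1 : Matrix (Fin N) (Fin N) ℝ) + (P * K)ᵀ * (P * K)).PosDef := by
      have := Matrix.posSemidef_conjTranspose_mul_self (P * K)
      rw [show (P * K)ᴴ = (P * K)ᵀ from rfl] at this
      exact Matrix.PosDef.one.add_posSemidef this
    exact isUnit_iff_ne_zero.mpr hpd.det_pos.ne'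
  have key : Kᵀ * P * (1 + K * Kᵀ * P) = (1 + Kᵀ * P * K) * (Kᵀ * P) := by
    simp only [Matrix.mul_add, Matrix.add_mul, Matrix.mul_one, Matrix.one_mul,
      Matrix.mul_assoc]
  have h2 : (1 + Kᵀ * P * K)⁻¹ * (Kᵀ * P) = Kᵀ * P * (1 + K * Kᵀ * P)⁻¹ := by
    have e1 : Kᵀ * P * (1 + K * Kᵀ * P) * (1 + K * Kᵀ * P)⁻¹ = Kᵀ * P :=
      Matrix.mul_nonsing_inv_cancel_right _ _ hinv
    calc (1 + Kᵀ * P * K)⁻¹ * (Kᵀ * P)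
        = (1 + Kᵀ * P * K)⁻¹ * (Kᵀ * P * (1 + K * Kᵀ * P) * (1 + K * Kᵀ * P)⁻¹) := by
          rw [e1]
      _ = (1 + Kᵀ * P * K)⁻¹ * ((1 + Kᵀ * P * K) * (Kᵀ * P) * (1 + K * Kᵀ * P)⁻¹) := by
          rw [key]
      _ = Kᵀ * P * (1 + K * Kᵀ * P)⁻¹ := by
          rw [← Matrix.mul_assoc, ← Matrix.mul_assoc, Matrix.nonsing_inv_mul _ hS,
            Matrix.one_mul]
  have hΔW2 : ΔW = (R * (1 + Kᵀ * P * K)⁻¹) * (P * K)ᵀ := by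
    rw [hΔW, hKtP, Matrix.mul_assoc R, Matrix.mul_assoc R, ← h2, ← Matrix.mul_assoc,
      ← Matrix.mul_assoc]
  have hΔWT : ΔWᵀ = (P * K) * (R * (1 + Kᵀ * P * K)⁻¹)ᵀ := by
    rw [hΔW2, transpose_mul, transpose_transpose]
  have hrankRA : (R * (1 + Kᵀ * P * K)⁻¹).rank = N := by
    rw [Matrix.rank_mul_eq_left_of_isUnit_det _ _ (Matrix.isUnit_nonsing_inv_det _ hS)]
    exact hR
  have hsurjRA : Function.Surjective ((R * (1 + Kᵀ * P * K)⁻¹)ᵀ).mulVecLin :=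
    surj_of_rank_eq _ (by rw [Matrix.rank_transpose]; exact hrankRA)
  have hcol : colSpace ΔWᵀ = colSpace (P * K) := by
    rw [hΔWT]; exact colSpace_mul_surj _ _ hsurjRA
  have hrank : ΔW.rank = N := by
    rw [← Matrix.rank_transpose]
    have : ΔWᵀ.rank = (P * K).rank := by
      show Module.finrank ℝ (colSpace ΔWᵀ) = Module.finrank ℝ (colSpace (P * K))
      rw [hcol]
    rw [this]; exact hPK
  refine ⟨hrank, ?_⟩
  intro U Sig V hU hV hDiag hSig hSVD
  have hSigT : Sigᵀ = Sig := by
    ext i j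
    by_cases h : i = j
    · subst h; rfl
    · rw [transpose_apply, hDiag h, hDiag (Ne.symm h)]
  have hUrank : U.rank = N := by
    refine le_antisymm (Matrix.rank_le_width U) ?_
    have h1 : (Uᵀ * U).rank = N := by rw [hU, Matrix.rank_one, Fintype.card_fin]
    calc N = (Uᵀ * U).rank := h1.symm
      _ ≤ U.rank := Matrix.rank_mul_le_right Uᵀ U
  have hsurj : Function.Surjective (Sig * Uᵀ).mulVecLin := by
    apply surj_of_rank_eq
    rw [Matrix.rank_mul_eq_right_of_isUnit_det _ _ hSig, Matrix.rank_transpose]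
    exact hUrank
  have hΔWT2 : ΔWᵀ = V * (Sig * Uᵀ) := by
    rw [hSVD, transpose_mul, transpose_mul, transpose_transpose, hSigT, ← Matrix.mul_assoc]
  rw [← colSpace_mul_surj V (Sig * Uᵀ) hsurj, ← hΔWT2, hcol]
end

section
/- Let P be a symmetric idempotent matrix, K, ΔK in R^{d_in×N} with P ΔK = 0, and R in R^{d_out×N}, and suppose the relevant inverses exist. Define F(K', R) = R (I + K'^T P K')^{-1} K'^T P. Then F(K + ΔK, R) = F(K, R). -/
open Matrix

/-- **Indistinguishability lemma for AlphaEdit.** Let `P` be symmetric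
idempotent, and `K, ΔK : ℝ^{d_in×N}` with `P ΔK = 0`. Then, writing
`F(K', R) = R (I + K'ᵀ P K')⁻¹ K'ᵀ P`, we have `F(K + ΔK, R) = F(K, R)`
for every residual matrix `R` (assuming the relevant inverse exists). -/
theorem alphaedit_indistinguishability {din dout N : ℕ}
    (P : Matrix (Fin din) (Fin din) ℝ) (hPsymm : Pᵀ = P) (hPidem : P * P = P)
    (K ΔK : Matrix (Fin din) (Fin N) ℝ) (hΔK : P * ΔK = 0)
    (R : Matrix (Fin dout) (Fin N) ℝ)
    (hinv : IsUnit (1 + Kᵀ * P * K).det) :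
    R * (1 + (K + ΔK)ᵀ * P * (K + ΔK))⁻¹ * (K + ΔK)ᵀ * P =
      R * (1 + Kᵀ * P * K)⁻¹ * Kᵀ * P := by
  have h1 : ΔKᵀ * P = 0 := by
    have h := congrArg Matrix.transpose hΔK
    simpa [Matrix.transpose_mul, hPsymm] using h
  have h2 : (K + ΔK)ᵀ * P = Kᵀ * P := by
    rw [Matrix.transpose_add, Matrix.add_mul, h1, add_zero]
  have h3 : (K + ΔK)ᵀ * P * (K + ΔK) = Kᵀ * P * K := by
    rw [h2, Matrix.mul_add, Matrix.mul_assoc Kᵀ P ΔK, hΔK, Matrix.mul_zero, add_zero]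
  rw [h3, Matrix.mul_assoc, h2, ← Matrix.mul_assoc]
end

section
/- Under the assumptions: (i) the candidate set contains all N edited subjects; (ii) the key matrix K and residual matrix R have full column rank N; (iii) the edited key vectors and non-edited candidate key vectors are δθ-separable on col(K); (iv) the covariance C is positive definite — the projection-based scoring ρ(k) = ‖Π_{col(V_N)} k‖/‖k‖ with col(V_N) = col(K) ranks all N edited subjects strictly above all non-edited candidates, and the angles arccos ρ of the N-th and (N+1)-th ranked candidates (in descending score order) differ by at least δθ. -/
open Matrix
open scoped RealInnerProductSpace

/-- A column of a matrix, viewed as a vector of Euclidean space. -/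
noncomputable def colVec {m n : ℕ} (M : Matrix (Fin m) (Fin n) ℝ) (j : Fin n) :
    EuclideanSpace ℝ (Fin m) :=
  (WithLp.equiv 2 (Fin m → ℝ)).symm fun i => M i j

/-- The column space of a matrix as a subspace of Euclidean space. -/
noncomputable def colSpaceE {m n : ℕ} (M : Matrix (Fin m) (Fin n) ℝ) :
    Submodule ℝ (EuclideanSpace ℝ (Fin m)) :=
  Submodule.span ℝ (Set.range (colVec M))

/-- The projection score of a vector `k` on a subspace `U`: `‖Π_U k‖ / ‖k‖`. -/
noncomputable def score {d : ℕ} (U : Submodule ℝ (EuclideanSpace ℝ (Fin d)))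
    (k : EuclideanSpace ℝ (Fin d)) : ℝ :=
  ‖(U.orthogonalProjection k : EuclideanSpace ℝ (Fin d))‖ / ‖k‖

/-- The angle between a vector `k` and a subspace `U`: `arccos (score U k)`. -/
noncomputable def angleTo {d : ℕ} (U : Submodule ℝ (EuclideanSpace ℝ (Fin d)))
    (k : EuclideanSpace ℝ (Fin d)) : ℝ :=
  Real.arccos (score U k)

/-!
The row space of `M = ΔW C` is the span of the right singular vectors, so `col V = col Mᵀ`.
By the push-through identity `C (C + K Kᵀ)⁻¹ K = K (1 + Kᵀ C⁻¹ K)⁻¹` one has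
`Mᵀ = K (1 + Kᵀ C⁻¹ K)⁻¹ Rᵀ`, and since the middle factor is invertible and `Rᵀ` has a right
inverse (`R` has full column rank), `col Mᵀ = col K`. Hence the scores and angles with respect to
`col V` are those with respect to `col K`, and strict separation of the angles forces strict
separation of the scores because `arccos` is antitone.
-/

section ColumnSpace

variable {m n p : ℕ}

lemma colVec_mul (A : Matrix (Fin m) (Fin n) ℝ) (B : Matrix (Fin n) (Fin p) ℝ) (j : Fin p) :
    colVec (A * B) j = ∑ l : Fin n, B l j • colVec A l := by
  ext i
  simp [colVec, Matrix.mul_apply, mul_comm]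

lemma colSpaceE_mul_le (A : Matrix (Fin m) (Fin n) ℝ) (B : Matrix (Fin n) (Fin p) ℝ) :
    colSpaceE (A * B) ≤ colSpaceE A := by
  rw [colSpaceE, Submodule.span_le]
  rintro _ ⟨j, rfl⟩
  rw [colVec_mul]
  exact Submodule.sum_mem _ fun l _ => Submodule.smul_mem _ _ (Submodule.subset_span ⟨l, rfl⟩)

lemma colSpaceE_mul_of_mul_eq_one (A : Matrix (Fin m) (Fin n) ℝ) {B : Matrix (Fin n) (Fin p) ℝ}
    {B' : Matrix (Fin p) (Fin n) ℝ} (hB : B * B' = 1) : colSpaceE (A * B) = colSpaceE A := by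
  refine le_antisymm (colSpaceE_mul_le A B) ?_
  calc colSpaceE A = colSpaceE (A * B * B') := by rw [Matrix.mul_assoc, hB, Matrix.mul_one]
    _ ≤ colSpaceE (A * B) := colSpaceE_mul_le _ _

lemma colSpaceE_transpose_eq_of_svd {q : ℕ} {M : Matrix (Fin q) (Fin m) ℝ}
    {U : Matrix (Fin q) (Fin n) ℝ} {Sig : Matrix (Fin n) (Fin n) ℝ} {V : Matrix (Fin m) (Fin n) ℝ}
    (hU : Uᵀ * U = 1) (hSig : IsUnit Sig.det) (hSVD : M = U * Sig * Vᵀ) :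
    colSpaceE Mᵀ = colSpaceE V := by
  have hSigT : IsUnit Sigᵀ.det := by rwa [Matrix.det_transpose]
  have hMT : Mᵀ = V * (Sigᵀ * Uᵀ) := by
    simp only [hSVD, Matrix.transpose_mul, Matrix.transpose_transpose, Matrix.mul_assoc]
  rw [hMT]
  refine colSpaceE_mul_of_mul_eq_one V (B' := U * Sigᵀ⁻¹) ?_
  rw [Matrix.mul_assoc, ← Matrix.mul_assoc Uᵀ, hU, Matrix.one_mul,
    Matrix.mul_nonsing_inv _ hSigT]

end ColumnSpace

lemma Matrix.isUnit_det_of_rank_eq_card {n K : Type*} [Fintype n] [DecidableEq n] [Field K]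
    (A : Matrix n n K) (h : A.rank = Fintype.card n) : IsUnit A.det := by
  rw [← Matrix.isUnit_iff_isUnit_det, ← Matrix.mulVec_surjective_iff_isUnit]
  have hrange : LinearMap.range A.mulVecLin = ⊤ := by
    apply Submodule.eq_top_of_finrank_eq
    rw [← Matrix.rank, h, Module.finrank_fintype_fun_eq_card]
  exact LinearMap.range_eq_top.mp hrange

lemma Matrix.isUnit_det_transpose_mul_self_of_rank_eq {m n : ℕ} (A : Matrix (Fin m) (Fin n) ℝ)
    (hA : A.rank = n) : IsUnit (Aᵀ * A).det := by
  apply Matrix.isUnit_det_of_rank_eq_card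
  rw [Matrix.rank_transpose_mul_self, hA, Fintype.card_fin]

lemma colSpaceE_mul_mul_transpose_of_rank_eq {m n q : ℕ} (K : Matrix (Fin m) (Fin n) ℝ)
    {A : Matrix (Fin n) (Fin n) ℝ} (hA : IsUnit A.det) {R : Matrix (Fin q) (Fin n) ℝ}
    (hR : R.rank = n) : colSpaceE (K * A * Rᵀ) = colSpaceE K := by
  have hRR := R.isUnit_det_transpose_mul_self_of_rank_eq hR
  rw [Matrix.mul_assoc]
  refine colSpaceE_mul_of_mul_eq_one K (B' := R * (Rᵀ * R)⁻¹ * A⁻¹) ?_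
  rw [Matrix.mul_assoc, ← Matrix.mul_assoc Rᵀ, ← Matrix.mul_assoc Rᵀ,
    Matrix.mul_nonsing_inv _ hRR, Matrix.one_mul, Matrix.mul_nonsing_inv _ hA]

lemma Matrix.mul_inv_add_mul_transpose_mul {m n R : Type*} [Fintype m] [DecidableEq m]
    [Fintype n] [DecidableEq n] [CommRing R] {C : Matrix m m R} (K : Matrix m n R)
    (hC : IsUnit C.det) (hS : IsUnit (C + K * Kᵀ).det) (hT : IsUnit (1 + Kᵀ * C⁻¹ * K).det) :
    C * (C + K * Kᵀ)⁻¹ * K = K * (1 + Kᵀ * C⁻¹ * K)⁻¹ := by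
  have hpush : (C + K * Kᵀ) * (C⁻¹ * K) = K * (1 + Kᵀ * C⁻¹ * K) := by
    rw [Matrix.add_mul, Matrix.mul_add, Matrix.mul_one, Matrix.mul_nonsing_inv_cancel_left _ _ hC]
    simp only [Matrix.mul_assoc]
  calc C * (C + K * Kᵀ)⁻¹ * K
      = C * (C + K * Kᵀ)⁻¹ * ((C + K * Kᵀ) * (C⁻¹ * K)) * (1 + Kᵀ * C⁻¹ * K)⁻¹ := by
        rw [hpush, ← Matrix.mul_assoc, Matrix.mul_nonsing_inv_cancel_right _ _ hT]
    _ = K * (1 + Kᵀ * C⁻¹ * K)⁻¹ := by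
        rw [Matrix.mul_assoc C, Matrix.nonsing_inv_mul_cancel_left _ _ hS,
          Matrix.mul_nonsing_inv_cancel_left _ _ hC]

lemma Matrix.PosDef.one_add_transpose_mul_inv_mul {m n : ℕ} {C : Matrix (Fin m) (Fin m) ℝ}
    (hC : C.PosDef) (K : Matrix (Fin m) (Fin n) ℝ) : (1 + Kᵀ * C⁻¹ * K).PosDef := by
  refine PosDef.one.add_posSemidef ?_
  simpa only [conjTranspose_eq_transpose_of_trivial] using
    hC.inv.posSemidef.conjTranspose_mul_mul_same K

lemma Matrix.PosDef.transpose_mul_transpose_mul_inv_add_mul_transpose_mul {m n q : ℕ}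
    {C : Matrix (Fin m) (Fin m) ℝ} (hC : C.PosDef) (K : Matrix (Fin m) (Fin n) ℝ)
    (R : Matrix (Fin q) (Fin n) ℝ) :
    (R * Kᵀ * (C + K * Kᵀ)⁻¹ * C)ᵀ = K * (1 + Kᵀ * C⁻¹ * K)⁻¹ * Rᵀ := by
  have hKKT : (K * Kᵀ).PosSemidef := by
    simpa only [conjTranspose_eq_transpose_of_trivial] using posSemidef_self_mul_conjTranspose K
  have hCT : Cᵀ = C := by
    simpa only [conjTranspose_eq_transpose_of_trivial] using hC.isHermitian.eq
  have hST : (C + K * Kᵀ)ᵀ = C + K * Kᵀ := by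
    rw [Matrix.transpose_add, hCT, Matrix.transpose_mul, Matrix.transpose_transpose]
  rw [Matrix.transpose_mul, Matrix.transpose_mul, Matrix.transpose_mul,
    Matrix.transpose_nonsing_inv, hST, hCT, Matrix.transpose_transpose, ← Matrix.mul_assoc,
    ← Matrix.mul_assoc]
  exact congrArg (· * Rᵀ) (Matrix.mul_inv_add_mul_transpose_mul K hC.det_pos.ne'.isUnit
    (hC.add_posSemidef hKKT).det_pos.ne'.isUnit
    (hC.one_add_transpose_mul_inv_mul K).det_pos.ne'.isUnit)

lemma score_lt_of_le_angleTo_sub {d : ℕ} {U : Submodule ℝ (EuclideanSpace ℝ (Fin d))}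
    {k₁ k₂ : EuclideanSpace ℝ (Fin d)} {δ : ℝ} (hδ : 0 < δ)
    (h : δ ≤ angleTo U k₂ - angleTo U k₁) : score U k₂ < score U k₁ := by
  by_contra! hle
  have := Real.arccos_le_arccos hle
  simp only [angleTo] at h
  linarith

theorem memit_subject_recovery_general {din dout N : ℕ}
    (C : Matrix (Fin din) (Fin din) ℝ) (hC : C.PosDef)
    (K : Matrix (Fin din) (Fin N) ℝ) (R : Matrix (Fin dout) (Fin N) ℝ)
    (hR : R.rank = N)
    (ΔW : Matrix (Fin dout) (Fin din) ℝ) (hΔW : ΔW = R * Kᵀ * (C + K * Kᵀ)⁻¹)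
    (M : Matrix (Fin dout) (Fin din) ℝ) (hM : M = ΔW * C)
    (U : Matrix (Fin dout) (Fin N) ℝ) (Sig : Matrix (Fin N) (Fin N) ℝ)
    (V : Matrix (Fin din) (Fin N) ℝ)
    (hU : Uᵀ * U = 1)
    (hSigInv : IsUnit Sig.det) (hSVD : M = U * Sig * Vᵀ)
    (Ked Knon : Set (EuclideanSpace ℝ (Fin din)))
    (δθ : ℝ) (hδθ : 0 < δθ)
    (hsep : ∀ k₁ ∈ Ked, ∀ k₂ ∈ Knon,
      angleTo (colSpaceE K) k₂ - angleTo (colSpaceE K) k₁ ≥ δθ) :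
    ∀ k₁ ∈ Ked, ∀ k₂ ∈ Knon,
      angleTo (colSpaceE V) k₂ - angleTo (colSpaceE V) k₁ ≥ δθ ∧
        score (colSpaceE V) k₂ < score (colSpaceE V) k₁ := by
  have hT : IsUnit (1 + Kᵀ * C⁻¹ * K)⁻¹.det :=
    isUnit_nonsing_inv_det _ (hC.one_add_transpose_mul_inv_mul K).det_pos.ne'.isUnit
  have hspace : colSpaceE V = colSpaceE K := by
    rw [← colSpaceE_transpose_eq_of_svd hU hSigInv hSVD, hM, hΔW,
      hC.transpose_mul_transpose_mul_inv_add_mul_transpose_mul,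
      colSpaceE_mul_mul_transpose_of_rank_eq K hT hR]
  intro k₁ h₁ k₂ h₂
  rw [hspace]
  exact ⟨hsep k₁ h₁ k₂ h₂, score_lt_of_le_angleTo_sub hδθ (hsep k₁ h₁ k₂ h₂)⟩

/-- **Guarantee of subject recovery for MEMIT.** Assume: (i) the candidate set
`Ked ∪ Knon` contains all `N` edited subjects (whose key vectors are the
columns of `K`, so `Ked` is the set of columns of `K`); (ii) the key matrix `K`
and residual matrix `R` have full column rank `N`; (iii) the edited key vectors
`Ked` and the non-edited candidate key vectors `Knon` are `δθ`-separable on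
`col K`; (iv) the covariance `C` is positive definite. Let
`ΔW = R Kᵀ (C + K Kᵀ)⁻¹`, `M = ΔW C`, and let `V` be the right factor of a
compact rank-`N` SVD of `M` (so that `col V = col K`). Then the
projection-based score `ρ(k) = ‖Π_{col V} k‖ / ‖k‖` ranks every edited subject
strictly above every non-edited candidate, and the corresponding angles
`arccos ρ` differ by at least `δθ`. -/
theorem memit_subject_recovery {din dout N : ℕ}
    (C : Matrix (Fin din) (Fin din) ℝ) (hC : C.PosDef)
    (K : Matrix (Fin din) (Fin N) ℝ) (R : Matrix (Fin dout) (Fin N) ℝ)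
    (hK : K.rank = N) (hR : R.rank = N)
    (ΔW : Matrix (Fin dout) (Fin din) ℝ) (hΔW : ΔW = R * Kᵀ * (C + K * Kᵀ)⁻¹)
    (M : Matrix (Fin dout) (Fin din) ℝ) (hM : M = ΔW * C)
    (U : Matrix (Fin dout) (Fin N) ℝ) (Sig : Matrix (Fin N) (Fin N) ℝ)
    (V : Matrix (Fin din) (Fin N) ℝ)
    (hU : Uᵀ * U = 1) (hV : Vᵀ * V = 1) (hSig : Sig.IsDiag)
    (hSigInv : IsUnit Sig.det) (hSVD : M = U * Sig * Vᵀ)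
    (Ked Knon : Set (EuclideanSpace ℝ (Fin din)))
    (hKed : Ked = Set.range (colVec K))
    (hKnonFin : Knon.Finite) (hKnon0 : ∀ k ∈ Knon, k ≠ 0)
    (hdisj : Disjoint Ked Knon)
    (δθ : ℝ) (hδθ : 0 < δθ) (hδθ' : δθ < Real.pi / 2)
    (hsep : ∀ k₁ ∈ Ked, ∀ k₂ ∈ Knon,
      angleTo (colSpaceE K) k₂ - angleTo (colSpaceE K) k₁ ≥ δθ) :
    ∀ k₁ ∈ Ked, ∀ k₂ ∈ Knon,
      angleTo (colSpaceE V) k₂ - angleTo (colSpaceE V) k₁ ≥ δθ ∧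
        score (colSpaceE V) k₂ < score (colSpaceE V) k₁ :=
  memit_subject_recovery_general C hC K R hR ΔW hΔW M hM U Sig V hU hSigInv hSVD Ked Knon δθ hδθ
    hsep
end

section
/- Let C be symmetric positive definite, and K, K̃ in R^{d_in×N} with K̃^T C^{-1} K invertible. Given any ΔW in R^{d_out×d_in}, the matrix X = ΔW K (K̃^T C^{-1} K)^{-1} K̃^T C^{-1} is the unique matrix satisfying both: row(X C) ⊆ col(K̃) and X K = ΔW K. -/
open Matrix

lemma rowSpace_mul_transpose_le {m n p : ℕ} (A : Matrix (Fin m) (Fin p) ℝ)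
    (B : Matrix (Fin n) (Fin p) ℝ) : rowSpace (A * Bᵀ) ≤ colSpace B := by
  unfold rowSpace colSpace
  rw [Matrix.transpose_mul, Matrix.transpose_transpose, Matrix.mulVecLin_mul]
  exact LinearMap.range_comp_le_range _ _

lemma exists_factor {m n p : ℕ} (Y : Matrix (Fin m) (Fin p) ℝ)
    (B : Matrix (Fin p) (Fin n) ℝ) (h : rowSpace Y ≤ colSpace B) :
    ∃ A : Matrix (Fin m) (Fin n) ℝ, Y = A * Bᵀ := by
  have hrow : ∀ i : Fin m, ∃ a : Fin n → ℝ, B.mulVec a = Y i := by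
    intro i
    have : (Y i) ∈ colSpace B := by
      apply h
      exact ⟨Pi.single i 1, by
        ext j
        simp [Matrix.mulVec, dotProduct, Pi.single_apply]⟩
    exact this
  choose a ha using hrow
  refine ⟨Matrix.of a, ?_⟩
  ext i j
  have := congrFun (ha i) j
  simpa [Matrix.mulVec, dotProduct, Matrix.mul_apply, mul_comm] using this.symm

/-- **Existence and uniqueness of the subspace-camouflage defense update
(MEMIT case).** Let `C` be symmetric positive definite and `K, K̃ : ℝ^{d_in×N}`
with `K̃ᵀ C⁻¹ K` invertible. For any `ΔW : ℝ^{d_out×d_in}`, the matrix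
`X = ΔW K (K̃ᵀ C⁻¹ K)⁻¹ K̃ᵀ C⁻¹` is the unique matrix satisfying both
`row (X C) ⊆ col K̃` and `X K = ΔW K`. -/
theorem memit_defense_unique {din dout N : ℕ}
    (C : Matrix (Fin din) (Fin din) ℝ) (hC : C.PosDef)
    (K Ktil : Matrix (Fin din) (Fin N) ℝ)
    (hinv : IsUnit (Ktilᵀ * C⁻¹ * K).det)
    (ΔW : Matrix (Fin dout) (Fin din) ℝ)
    (X : Matrix (Fin dout) (Fin din) ℝ)
    (hX : X = ΔW * K * (Ktilᵀ * C⁻¹ * K)⁻¹ * Ktilᵀ * C⁻¹) :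
    (rowSpace (X * C) ≤ colSpace Ktil ∧ X * K = ΔW * K) ∧
      ∀ Y : Matrix (Fin dout) (Fin din) ℝ,
        rowSpace (Y * C) ≤ colSpace Ktil → Y * K = ΔW * K → Y = X := by
  set M := Ktilᵀ * C⁻¹ * K with hM
  have hCdet : IsUnit C.det := isUnit_iff_ne_zero.mpr (ne_of_gt hC.det_pos)
  have hXC : X * C = (ΔW * K * M⁻¹) * Ktilᵀ := by
    rw [hX]
    rw [Matrix.mul_assoc _ C⁻¹ C, Matrix.nonsing_inv_mul C hCdet, Matrix.mul_one]
  have hXK : X * K = ΔW * K := by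
    rw [hX]
    have : ΔW * K * M⁻¹ * Ktilᵀ * C⁻¹ * K = ΔW * K * M⁻¹ * M := by
      simp only [hM, Matrix.mul_assoc]
    rw [this, Matrix.mul_assoc, Matrix.nonsing_inv_mul M hinv, Matrix.mul_one]
  refine ⟨⟨hXC ▸ rowSpace_mul_transpose_le _ _, hXK⟩, ?_⟩
  intro Y hrow hYK
  obtain ⟨A, hA⟩ := exists_factor (Y * C) Ktil hrow
  have hY : Y = A * Ktilᵀ * C⁻¹ := by
    have := congrArg (· * C⁻¹) hA
    simpa [Matrix.mul_assoc, Matrix.mul_nonsing_inv C hCdet] using this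
  have hAM : A * M = ΔW * K := by
    rw [hM, ← hYK, hY]; simp only [Matrix.mul_assoc]
  have hAeq : A = ΔW * K * M⁻¹ := by
    have := congrArg (· * M⁻¹) hAM
    simpa [Matrix.mul_assoc, Matrix.mul_nonsing_inv M hinv] using this
  rw [hY, hAeq, hX, hM]
end

section
/- Let P be symmetric idempotent, and K, K̃ with K̃^T P K invertible. For any ΔW, the matrix X = ΔW K (K̃^T P K)^{-1} K̃^T P is the unique matrix satisfying row(X) ⊆ col(P K̃) and X K = ΔW K. -/
open Matrix

/-- **Existence and uniqueness of the subspace-camouflage defense update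
(AlphaEdit case).** Let `P` be symmetric idempotent and `K, K̃` with
`K̃ᵀ P K` invertible. For any `ΔW`, the matrix
`X = ΔW K (K̃ᵀ P K)⁻¹ K̃ᵀ P` is the unique matrix satisfying
`row X ⊆ col (P K̃)` and `X K = ΔW K`. -/
theorem alphaedit_defense_unique {din dout N : ℕ}
    (P : Matrix (Fin din) (Fin din) ℝ) (hPsymm : Pᵀ = P) (hPidem : P * P = P)
    (K Ktil : Matrix (Fin din) (Fin N) ℝ)
    (hinv : IsUnit (Ktilᵀ * P * K).det)
    (ΔW : Matrix (Fin dout) (Fin din) ℝ)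
    (X : Matrix (Fin dout) (Fin din) ℝ)
    (hX : X = ΔW * K * (Ktilᵀ * P * K)⁻¹ * Ktilᵀ * P) :
    (rowSpace X ≤ colSpace (P * Ktil) ∧ X * K = ΔW * K) ∧
      ∀ Y : Matrix (Fin dout) (Fin din) ℝ,
        rowSpace Y ≤ colSpace (P * Ktil) → Y * K = ΔW * K → Y = X := by
  subst hX
  set B := Ktilᵀ * P * K with hB
  have hBinv : B * B⁻¹ = 1 := Matrix.mul_nonsing_inv B hinv
  have hinvB : B⁻¹ * B = 1 := Matrix.nonsing_inv_mul B hinv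
  constructor
  · constructor
    · -- row space containment
      intro v hv
      obtain ⟨w, hw⟩ := hv
      have hT : (ΔW * K * B⁻¹ * Ktilᵀ * P)ᵀ = (P * Ktil) * (B⁻¹ᵀ * Kᵀ * ΔWᵀ) := by
        simp [Matrix.transpose_mul, hPsymm, Matrix.mul_assoc]
      refine ⟨(B⁻¹ᵀ * Kᵀ * ΔWᵀ).mulVecLin w, ?_⟩
      rw [← hw]
      have := congrArg (fun M => Matrix.mulVecLin M w) hT
      simpa [Matrix.mulVecLin_mul] using this.symm
    · -- X K = ΔW K
      calc ΔW * K * B⁻¹ * Ktilᵀ * P * K = ΔW * K * (B⁻¹ * B) := by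
            rw [hB]; simp only [Matrix.mul_assoc]
        _ = ΔW * K := by rw [hinvB, Matrix.mul_one]
  · intro Y hrow hYK
    -- extract a matrix C with Yᵀ = (P * Ktil) * C
    have h : ∀ i : Fin dout, ∃ w, (P * Ktil).mulVecLin w = Yᵀ.mulVecLin (Pi.single i 1) :=
      fun i => hrow ⟨Pi.single i 1, rfl⟩
    set C : Matrix (Fin N) (Fin dout) ℝ := Matrix.of fun j i => (h i).choose j with hC
    have hYT : Yᵀ = (P * Ktil) * C := by
      ext i j
      have hspec := (h j).choose_spec
      have h1 : ((P * Ktil) * C) i j = ((P * Ktil) *ᵥ ((h j).choose)) i := by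
        simp [Matrix.mul_apply, Matrix.mulVec, dotProduct, hC]
      rw [h1, ← Matrix.mulVecLin_apply, hspec]
      simp [Matrix.mulVecLin_apply, Matrix.mulVec, dotProduct, Pi.single_apply]
    have hY : Y = Cᵀ * Ktilᵀ * P := by
      have := congrArg Matrix.transpose hYT
      simpa [Matrix.transpose_mul, hPsymm, Matrix.mul_assoc] using this
    have hCT : Cᵀ * B = ΔW * K := by
      rw [hB, ← hYK, hY]; simp only [Matrix.mul_assoc]
    have hCeq : Cᵀ = ΔW * K * B⁻¹ := by
      have h2 := congrArg (fun M => M * B⁻¹) hCT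
      simpa only [Matrix.mul_assoc, hBinv, Matrix.mul_one] using h2
    rw [hY, hCeq]
end

section
/- Let C be positive definite, K, K̃ in R^{d_in×N} with K̃^T C^{-1} K invertible, and R in R^{d_out×N}. Define ΔW_MEMIT(A, B) = B (I + A^T C^{-1} A)^{-1} A^T C^{-1} and ΔW_def = ΔW_MEMIT(K, R) K (K̃^T C^{-1} K)^{-1} K̃^T C^{-1}. Then with R' = R (I + K^T C^{-1} K)^{-1} K^T C^{-1} K (K̃^T C^{-1} K)^{-1} (I + K̃^T C^{-1} K̃), one has ΔW_def = ΔW_MEMIT(K̃, R'). -/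
open Matrix

/-- **Indistinguishability of the subspace camouflage defense from an ordinary
MEMIT edit.** Let `C` be positive definite, `K, K̃ : ℝ^{d_in×N}` with
`K̃ᵀ C⁻¹ K` invertible, and `R : ℝ^{d_out×N}`. Writing
`ΔW_MEMIT(A, B) = B (I + Aᵀ C⁻¹ A)⁻¹ Aᵀ C⁻¹` and
`ΔW_def = ΔW_MEMIT(K, R) K (K̃ᵀ C⁻¹ K)⁻¹ K̃ᵀ C⁻¹`, with the modified residual
`R' = R (I + Kᵀ C⁻¹ K)⁻¹ Kᵀ C⁻¹ K (K̃ᵀ C⁻¹ K)⁻¹ (I + K̃ᵀ C⁻¹ K̃)`,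
one has `ΔW_def = ΔW_MEMIT(K̃, R')`. -/
theorem memit_defense_indistinguishable {din dout N : ℕ}
    (C : Matrix (Fin din) (Fin din) ℝ) (hC : C.PosDef)
    (K Ktil : Matrix (Fin din) (Fin N) ℝ)
    (hinv : IsUnit (Ktilᵀ * C⁻¹ * K).det)
    (R : Matrix (Fin dout) (Fin N) ℝ)
    (ΔW_MEMIT : Matrix (Fin din) (Fin N) ℝ → Matrix (Fin dout) (Fin N) ℝ →
      Matrix (Fin dout) (Fin din) ℝ)
    (hΔW_MEMIT : ∀ A B, ΔW_MEMIT A B = B * (1 + Aᵀ * C⁻¹ * A)⁻¹ * Aᵀ * C⁻¹)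
    (ΔW_def : Matrix (Fin dout) (Fin din) ℝ)
    (hΔW_def : ΔW_def = ΔW_MEMIT K R * K * (Ktilᵀ * C⁻¹ * K)⁻¹ * Ktilᵀ * C⁻¹)
    (R' : Matrix (Fin dout) (Fin N) ℝ)
    (hR' : R' = R * (1 + Kᵀ * C⁻¹ * K)⁻¹ * (Kᵀ * C⁻¹ * K) *
      (Ktilᵀ * C⁻¹ * K)⁻¹ * (1 + Ktilᵀ * C⁻¹ * Ktil)) :
    ΔW_def = ΔW_MEMIT Ktil R' := by
  have hpd : (1 + Ktilᵀ * (C⁻¹ * Ktil)).PosDef := by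
    have h1 : (Ktilᵀ * (C⁻¹ * Ktil)).PosSemidef := by
      simpa [Matrix.mul_assoc] using hC.inv.posSemidef.conjTranspose_mul_mul_same Ktil
    exact Matrix.PosDef.add_posSemidef Matrix.PosDef.one h1
  have h1 : (1 + Ktilᵀ * (C⁻¹ * Ktil)) * (1 + Ktilᵀ * (C⁻¹ * Ktil))⁻¹ = 1 :=
    Matrix.mul_nonsing_inv _ (isUnit_iff_ne_zero.mpr hpd.det_pos.ne')
  have h2 : (1 + Ktilᵀ * (C⁻¹ * Ktil)) * ((1 + Ktilᵀ * (C⁻¹ * Ktil))⁻¹ * (Ktilᵀ * C⁻¹)) =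
      Ktilᵀ * C⁻¹ := by rw [← Matrix.mul_assoc, h1, Matrix.one_mul]
  rw [hΔW_def, hR', hΔW_MEMIT, hΔW_MEMIT]
  simp only [Matrix.mul_assoc]
  rw [h2]
end

section
/- Let C be positive definite, k_*, k̃_* nonzero with k̃_*^T C^{-1} k_* ≠ 0, and r_* a vector. The camouflaged ROME update (r_* k̃_*^T C^{-1}) / (k̃_*^T C^{-1} k_*) equals the ordinary ROME update with key k̃_* and residual r' = (k̃_*^T C^{-1} k̃_* / k̃_*^T C^{-1} k_*) · r_*, where the ordinary ROME update with key k and residual r is (r k^T C^{-1}) / (k^T C^{-1} k). -/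
open Matrix

theorem Matrix.inv_smul_vecMulVec_eq_inv_smul_vecMulVec_div_smul {m n K : Type*} [Field K]
    {p q : K} (hq : q ≠ 0) (r : m → K) (v : n → K) :
    p⁻¹ • vecMulVec r v = q⁻¹ • vecMulVec ((q / p) • r) v := by
  rw [smul_vecMulVec, smul_smul, div_eq_mul_inv, inv_mul_cancel_left₀ hq]

theorem Matrix.PosDef.dotProduct_inv_mulVec_self_pos {n : Type*} [Fintype n] [DecidableEq n]
    {C : Matrix n n ℝ} (hC : C.PosDef) {k : n → ℝ} (hk : k ≠ 0) :
    0 < k ⬝ᵥ C⁻¹ *ᵥ k := by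
  simpa only [star_trivial] using hC.inv.dotProduct_mulVec_pos hk

theorem rome_defense_indistinguishable_general {din dout : ℕ}
    (C : Matrix (Fin din) (Fin din) ℝ) (hC : C.PosDef)
    (kstar ktil : Fin din → ℝ) (hktil : ktil ≠ 0)
    (rstar : Fin dout → ℝ)
    (r' : Fin dout → ℝ)
    (hr' : r' = ((ktil ⬝ᵥ C⁻¹.mulVec ktil) / (ktil ⬝ᵥ C⁻¹.mulVec kstar)) • rstar) :
    (ktil ⬝ᵥ C⁻¹.mulVec kstar)⁻¹ •
        Matrix.vecMulVec rstar (Matrix.vecMul ktil C⁻¹) =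
      (ktil ⬝ᵥ C⁻¹.mulVec ktil)⁻¹ •
        Matrix.vecMulVec r' (Matrix.vecMul ktil C⁻¹) := by
  rw [hr']
  exact inv_smul_vecMulVec_eq_inv_smul_vecMulVec_div_smul
    (hC.dotProduct_inv_mulVec_self_pos hktil).ne' _ _

/-- **Indistinguishability of the subspace camouflage defense (ROME case).**
Let `C` be positive definite, `k_*, k̃_*` nonzero with `k̃_*ᵀ C⁻¹ k_* ≠ 0`,
and `r_*` a vector. The camouflaged ROME update
`(r_* k̃_*ᵀ C⁻¹) / (k̃_*ᵀ C⁻¹ k_*)` equals the ordinary ROME update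
`(r kᵀ C⁻¹) / (kᵀ C⁻¹ k)` with key `k = k̃_*` and residual
`r' = (k̃_*ᵀ C⁻¹ k̃_* / k̃_*ᵀ C⁻¹ k_*) • r_*`. -/
theorem rome_defense_indistinguishable {din dout : ℕ}
    (C : Matrix (Fin din) (Fin din) ℝ) (hC : C.PosDef)
    (kstar ktil : Fin din → ℝ) (hkstar : kstar ≠ 0) (hktil : ktil ≠ 0)
    (hscalar : ktil ⬝ᵥ C⁻¹.mulVec kstar ≠ 0)
    (rstar : Fin dout → ℝ)
    (r' : Fin dout → ℝ)
    (hr' : r' = ((ktil ⬝ᵥ C⁻¹.mulVec ktil) / (ktil ⬝ᵥ C⁻¹.mulVec kstar)) • rstar) :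
    (ktil ⬝ᵥ C⁻¹.mulVec kstar)⁻¹ •
        Matrix.vecMulVec rstar (Matrix.vecMul ktil C⁻¹) =
      (ktil ⬝ᵥ C⁻¹.mulVec ktil)⁻¹ •
        Matrix.vecMulVec r' (Matrix.vecMul ktil C⁻¹) :=
  rome_defense_indistinguishable_general C hC kstar ktil hktil rstar r' hr'
end

section
/- Let C be positive definite, K, K̃ with K̃^T C^{-1} K invertible, and R arbitrary. For every K' in R^{d_in×N} such that K̃^T C^{-1} K' is invertible, there exists a residual matrix R' such that the camouflaged MEMIT update constructed from (K', K̃, R') equals the camouflaged MEMIT update constructed from (K, K̃, R). Explicitly, R' = R (I + K^T C^{-1} K)^{-1} K^T C^{-1} K (K̃^T C^{-1} K)^{-1} (K̃^T C^{-1} K') (K'^T C^{-1} K')^{-1} (I + K'^T C^{-1} K') works, where the camouflaged update from (K, K̃, R) is R (I + K^T C^{-1} K)^{-1} K^T C^{-1} K (K̃^T C^{-1} K)^{-1} K̃^T C^{-1}. -/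
/-!
The residual `R'` appends to `R (I + M)⁻¹ M (K̃ᵀ C⁻¹ K)⁻¹` exactly the inverse of the factor
`(I + M')⁻¹ M' (K̃ᵀ C⁻¹ K')⁻¹` that the update built from `K'` puts in its place, where
`M = Kᵀ C⁻¹ K` and `M' = K'ᵀ C⁻¹ K'`. The only content is that these factors are invertible: since
`K̃ᵀ C⁻¹ K'` is, `K'` is injective, so `M'` and hence `I + M'` are positive definite.
-/

open Matrix

namespace Matrix

variable {m n K : Type*} [Fintype m] [Fintype n] [DecidableEq n] [Field K]

theorem mulVec_injective_of_isUnit_det_mul {A : Matrix n m K} {B : Matrix m n K}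
    (h : IsUnit (A * B).det) : Function.Injective B.mulVec := by
  have hAB : Function.Injective (A * B).mulVec :=
    mulVec_injective_iff_isUnit.mpr ((isUnit_iff_isUnit_det _).mpr h)
  refine Function.Injective.of_comp (f := A.mulVec) ?_
  simpa only [Function.comp_def, mulVec_mulVec] using hAB

theorem PosDef.transpose_mul_inv_mul_of_isUnit_det [DecidableEq m] {C : Matrix n n ℝ}
    (hC : C.PosDef) {A : Matrix m n ℝ} {B : Matrix n m ℝ} (h : IsUnit (A * C⁻¹ * B).det) :
    (Bᵀ * C⁻¹ * B).PosDef := by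
  simpa only [conjTranspose_eq_transpose_of_trivial] using
    hC.inv.conjTranspose_mul_mul_same (mulVec_injective_of_isUnit_det_mul h)

end Matrix

theorem memit_defense_key_nonrecoverable_general {din dout N : ℕ}
    (C : Matrix (Fin din) (Fin din) ℝ) (hC : C.PosDef)
    (K Ktil : Matrix (Fin din) (Fin N) ℝ)
    (R : Matrix (Fin dout) (Fin N) ℝ)
    (Δ : Matrix (Fin din) (Fin N) ℝ → Matrix (Fin din) (Fin N) ℝ →
      Matrix (Fin dout) (Fin N) ℝ → Matrix (Fin dout) (Fin din) ℝ)
    (hΔ : ∀ A B D, Δ A B D =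
      D * (1 + Aᵀ * C⁻¹ * A)⁻¹ * (Aᵀ * C⁻¹ * A) * (Bᵀ * C⁻¹ * A)⁻¹ * Bᵀ * C⁻¹) :
    ∀ K' : Matrix (Fin din) (Fin N) ℝ, IsUnit (Ktilᵀ * C⁻¹ * K').det →
      ∃ R' : Matrix (Fin dout) (Fin N) ℝ,
        R' = R * (1 + Kᵀ * C⁻¹ * K)⁻¹ * (Kᵀ * C⁻¹ * K) * (Ktilᵀ * C⁻¹ * K)⁻¹ *
          (Ktilᵀ * C⁻¹ * K') * (K'ᵀ * C⁻¹ * K')⁻¹ * (1 + K'ᵀ * C⁻¹ * K') ∧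
        Δ K' Ktil R' = Δ K Ktil R := by
  intro K' hP
  have hM : (K'ᵀ * C⁻¹ * K').PosDef := hC.transpose_mul_inv_mul_of_isUnit_det hP
  have hM₁ : (1 + K'ᵀ * C⁻¹ * K').PosDef := PosDef.one.add_posSemidef hM.posSemidef
  refine ⟨_, rfl, ?_⟩
  rw [hΔ, hΔ, mul_nonsing_inv_cancel_right _ _ hM₁.det_pos.ne'.isUnit,
    nonsing_inv_mul_cancel_right _ _ hM.det_pos.ne'.isUnit, mul_nonsing_inv_cancel_right _ _ hP]

/-- **Non-recoverability of the true key matrix under subspace camouflage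
(MEMIT case).** Let `C` be positive definite, `K, K̃` with `K̃ᵀ C⁻¹ K`
invertible, and `R` arbitrary. Writing the camouflaged update built from
`(K, K̃, R)` as
`Δ(K, K̃, R) = R (I + Kᵀ C⁻¹ K)⁻¹ Kᵀ C⁻¹ K (K̃ᵀ C⁻¹ K)⁻¹ K̃ᵀ C⁻¹`,
for every `K' : ℝ^{d_in×N}` with `K̃ᵀ C⁻¹ K'` invertible there exists a
residual matrix `R'` — explicitly
`R' = R (I + Kᵀ C⁻¹ K)⁻¹ Kᵀ C⁻¹ K (K̃ᵀ C⁻¹ K)⁻¹ (K̃ᵀ C⁻¹ K') (K'ᵀ C⁻¹ K')⁻¹ (I + K'ᵀ C⁻¹ K')` —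
such that `Δ(K', K̃, R') = Δ(K, K̃, R)`. -/
theorem memit_defense_key_nonrecoverable {din dout N : ℕ}
    (C : Matrix (Fin din) (Fin din) ℝ) (hC : C.PosDef)
    (K Ktil : Matrix (Fin din) (Fin N) ℝ)
    (hinv : IsUnit (Ktilᵀ * C⁻¹ * K).det)
    (R : Matrix (Fin dout) (Fin N) ℝ)
    (Δ : Matrix (Fin din) (Fin N) ℝ → Matrix (Fin din) (Fin N) ℝ →
      Matrix (Fin dout) (Fin N) ℝ → Matrix (Fin dout) (Fin din) ℝ)
    (hΔ : ∀ A B D, Δ A B D =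
      D * (1 + Aᵀ * C⁻¹ * A)⁻¹ * (Aᵀ * C⁻¹ * A) * (Bᵀ * C⁻¹ * A)⁻¹ * Bᵀ * C⁻¹) :
    ∀ K' : Matrix (Fin din) (Fin N) ℝ, IsUnit (Ktilᵀ * C⁻¹ * K').det →
      ∃ R' : Matrix (Fin dout) (Fin N) ℝ,
        R' = R * (1 + Kᵀ * C⁻¹ * K)⁻¹ * (Kᵀ * C⁻¹ * K) * (Ktilᵀ * C⁻¹ * K)⁻¹ *
          (Ktilᵀ * C⁻¹ * K') * (K'ᵀ * C⁻¹ * K')⁻¹ * (1 + K'ᵀ * C⁻¹ * K') ∧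
        Δ K' Ktil R' = Δ K Ktil R :=
  memit_defense_key_nonrecoverable_general C hC K Ktil R Δ hΔ
end
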